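/- There is a short exact sequence of ℤ[G]-modules 0 → 𝓘_I/g̃𝓘_I → ℤ[G]/(g̃) → ℤ[G/I]/(g) → 0, in which the first map is induced by the inclusion 𝓘_I ⊆ ℤ[G] (in particular this induced map is injective) and the second map is induced by the projection ℤ[G] → ℤ[G/I]. -/

import Mathlib

open MonoidAlgebra

/-- The projection `ℤ[G] → ℤ[G/I]`. -/
noncomputable def toQuot {G : Type} [CommGroup G] (I : Subgroup G) :
    MonoidAlgebra ℤ G →+* MonoidAlgebra ℤ (G ⧸ I) :=
  MonoidAlgebra.mapDomainRingHom ℤ (QuotientGroup.mk' I)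

/-- The ideal `𝓘_I = ker(ℤ[G] → ℤ[G/I])`. -/
noncomputable def kerIdeal {G : Type} [CommGroup G] (I : Subgroup G) :
    Ideal (MonoidAlgebra ℤ G) :=
  RingHom.ker (toQuot I)

/-- The element `g̃ = 1 − φ̃⁻¹ + #I ∈ ℤ[G]`. -/
noncomputable def gtilde {G : Type} [CommGroup G] (I : Subgroup G) (φt : G) :
    MonoidAlgebra ℤ G :=
  1 - MonoidAlgebra.of ℤ G φt⁻¹ + (Nat.card I : MonoidAlgebra ℤ G)

/-!
Exactness in the middle and on the right only uses that `π : ℤ[G] → ℤ[G/I]` is surjective. For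
injectivity on the left, write `x ∈ 𝓘_I ∩ (g̃)` as `x = r g̃`; then `π r · g = 0`, and
`g = (1 + #I)·1 − φ⁻¹` is a nonzerodivisor of `ℤ[G/I]`, so `r ∈ 𝓘_I` and `x ∈ g̃ 𝓘_I`.
-/

namespace MonoidAlgebra

variable {R H : Type*} [Ring R] [LinearOrder R] [IsStrictOrderedRing R] [Group H]

theorem isLeftRegular_single_one_sub_single {c : R} (hc : 1 < |c|) (a : H) :
    IsLeftRegular (single 1 c - single a 1 : R[H]) := by
  rw [isLeftRegular_iff_right_eq_zero_of_mul]
  intro y hy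
  by_contra hy0
  obtain ⟨x₀, hx₀, hmax⟩ := y.coeff.support.exists_max_image (fun x => |y.coeff x|)
    (Finsupp.support_nonempty_iff.mpr (mt coeff_eq_zero.mp hy0))
  -- multiplying by `single 1 c - single a 1` would scale a coefficient of maximal size by `|c|`
  have hshift : y.coeff (a⁻¹ * x₀) = c * y.coeff x₀ := by
    have := congr_arg (fun z : R[H] => z.coeff x₀) hy
    simp only [sub_mul, coeff_sub, Finsupp.sub_apply, coeff_single_mul_apply, inv_one, one_mul,
      coeff_zero, Finsupp.coe_zero, Pi.zero_apply, sub_eq_zero] at this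
    exact this.symm
  have hy₀ : y.coeff x₀ ≠ 0 := Finsupp.mem_support_iff.mp hx₀
  have hmem : a⁻¹ * x₀ ∈ y.coeff.support := by
    rw [Finsupp.mem_support_iff, hshift]
    exact mul_ne_zero (abs_pos.mp (zero_lt_one.trans hc)) hy₀
  have hle := hmax _ hmem
  rw [hshift, abs_mul] at hle
  exact hle.not_gt (lt_mul_of_one_lt_left (abs_pos.mpr hy₀) hc)

end MonoidAlgebra

namespace Ideal

variable {R S : Type*} [CommRing R] [CommRing S]

noncomputable def quotMulSpanToQuotSpan (J : Ideal R) (g : R) :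
    (J ⧸ Submodule.comap J.subtype (span {g} * J : Ideal R)) →ₗ[R] R ⧸ span {g} :=
  Submodule.liftQ _ ((span {g}).mkQ ∘ₗ J.subtype) fun x hx ↦ by
    rw [LinearMap.mem_ker, LinearMap.comp_apply, Submodule.mkQ_apply, Submodule.Quotient.mk_eq_zero]
    exact mul_le_left (Submodule.mem_comap.mp hx)

noncomputable def quotSpanMap (π : R →+* S) (g : R) : R ⧸ span {g} →+* S ⧸ span {π g} :=
  quotientMap _ π ((span_singleton_le_iff_mem _).mpr (mem_span_singleton_self (π g)))

theorem quotMulSpanToQuotSpan_injective {π : R →+* S} {g : R} (hg : IsLeftRegular (π g)) :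
    Function.Injective (quotMulSpanToQuotSpan (RingHom.ker π) g) := by
  refine LinearMap.ker_eq_bot.mp (Submodule.ker_liftQ_eq_bot _ _ _ fun x hx ↦ ?_)
  obtain ⟨r, hr⟩ := mem_span_singleton'.mp ((Submodule.Quotient.mk_eq_zero _).mp hx)
  have hr_ker : r ∈ RingHom.ker π := by
    rw [RingHom.mem_ker, ← hg.mul_left_eq_zero_iff, ← map_mul, mul_comm, hr]
    exact x.2
  rw [Submodule.mem_comap, ← hr, mul_comm r g]
  exact mul_mem_mul (mem_span_singleton_self g) hr_ker

theorem exact_quotMulSpanToQuotSpan_quotSpanMap {π : R →+* S} (hπ : Function.Surjective π)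
    (g : R) : Function.Exact (quotMulSpanToQuotSpan (RingHom.ker π) g) (quotSpanMap π g) := by
  intro y
  obtain ⟨x, rfl⟩ := Quotient.mk_surjective y
  constructor
  · intro hx
    rw [quotSpanMap, quotientMap_mk, Quotient.eq_zero_iff_mem] at hx
    obtain ⟨s, hs⟩ := mem_span_singleton'.mp hx
    obtain ⟨r, rfl⟩ := hπ s
    have hker : x - r * g ∈ RingHom.ker π := by
      rw [RingHom.mem_ker, map_sub, map_mul, hs, sub_self]
    refine ⟨Submodule.Quotient.mk ⟨x - r * g, hker⟩, Quotient.eq.mpr ?_⟩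
    exact mem_span_singleton'.mpr ⟨-r, by simp only [Submodule.subtype_apply]; ring⟩
  · rintro ⟨z, hz⟩
    obtain ⟨w, rfl⟩ := Submodule.Quotient.mk_surjective _ z
    rw [← hz]
    show quotSpanMap π g (Quotient.mk _ w) = 0
    rw [quotSpanMap, quotientMap_mk, w.2.out, map_zero]

theorem quotSpanMap_surjective {π : R →+* S} (hπ : Function.Surjective π) (g : R) :
    Function.Surjective (quotSpanMap π g) :=
  quotientMap_surjective hπ

end Ideal

theorem toQuot_single {G : Type} [CommGroup G] (I : Subgroup G) (g : G) (r : ℤ) :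
    toQuot I (single g r) = single (QuotientGroup.mk g) r := by
  simp [toQuot, mapDomainRingHom]

theorem toQuot_surjective {G : Type} [CommGroup G] (I : Subgroup G) :
    Function.Surjective (toQuot I) := by
  intro s
  induction s using MonoidAlgebra.induction_linear with
  | zero => exact ⟨0, map_zero _⟩
  | add f g hf hg =>
      obtain ⟨a, rfl⟩ := hf
      obtain ⟨b, rfl⟩ := hg
      exact ⟨a + b, map_add _ a b⟩
  | single q r =>
      obtain ⟨g, rfl⟩ := QuotientGroup.mk'_surjective I q
      exact ⟨single g r, toQuot_single I g r⟩

theorem toQuot_gtilde {G : Type} [CommGroup G] (I : Subgroup G) (φt : G) :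
    toQuot I (gtilde I φt) =
      single 1 (1 + Nat.card I : ℤ) - single ((φt⁻¹ : G) : G ⧸ I) 1 := by
  rw [gtilde, map_add, map_sub, map_one, map_natCast, of_apply, toQuot_single, one_def,
    natCast_def, single_add]
  abel

theorem isLeftRegular_toQuot_gtilde {G : Type} [CommGroup G] [Finite G] (I : Subgroup G)
    (φt : G) : IsLeftRegular (toQuot I (gtilde I φt)) := by
  rw [toQuot_gtilde]
  refine isLeftRegular_single_one_sub_single ?_ _
  have : (0 : ℤ) < Nat.card I := Nat.cast_pos.mpr Nat.card_pos
  rw [abs_of_pos (by omega)]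
  omega

theorem statement7_general {G : Type} [CommGroup G] [Fintype G] (I : Subgroup G)
    (φt : G) :
    ∃ (f₁ : (↥(kerIdeal I) ⧸
          (Submodule.comap (kerIdeal I).subtype
            (Ideal.span {gtilde I φt} * kerIdeal I : Ideal (MonoidAlgebra ℤ G))))
        →ₗ[MonoidAlgebra ℤ G] (MonoidAlgebra ℤ G ⧸ Ideal.span {gtilde I φt}))
      (f₂ : (MonoidAlgebra ℤ G ⧸ Ideal.span {gtilde I φt}) →+*
        (MonoidAlgebra ℤ (G ⧸ I) ⧸ Ideal.span {toQuot I (gtilde I φt)})),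
      (∀ x : ↥(kerIdeal I),
        f₁ (Submodule.Quotient.mk x) = Ideal.Quotient.mk (Ideal.span {gtilde I φt}) ↑x) ∧
      (∀ x : MonoidAlgebra ℤ G,
        f₂ (Ideal.Quotient.mk (Ideal.span {gtilde I φt}) x)
          = Ideal.Quotient.mk (Ideal.span {toQuot I (gtilde I φt)}) (toQuot I x)) ∧
      Function.Injective f₁ ∧ Function.Exact f₁ f₂ ∧ Function.Surjective f₂ :=
  ⟨Ideal.quotMulSpanToQuotSpan (kerIdeal I) (gtilde I φt),
    Ideal.quotSpanMap (toQuot I) (gtilde I φt),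
    fun _ ↦ rfl, fun _ ↦ rfl,
    Ideal.quotMulSpanToQuotSpan_injective (isLeftRegular_toQuot_gtilde I φt),
    Ideal.exact_quotMulSpanToQuotSpan_quotSpanMap (toQuot_surjective I) _,
    Ideal.quotSpanMap_surjective (toQuot_surjective I) _⟩

/-- there is a short exact sequence of `ℤ[G]`-modules
`0 → 𝓘_I/g̃𝓘_I → ℤ[G]/(g̃) → ℤ[G/I]/(g) → 0`, the first map being induced by the
inclusion `𝓘_I ⊆ ℤ[G]` (in particular it is injective) and the second induced by the
projection `ℤ[G] → ℤ[G/I]` (here `g = π(g̃) = 1 − φ⁻¹ + #I ∈ ℤ[G/I]`). -/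
theorem statement7 {G : Type} [CommGroup G] [Fintype G] (I D : Subgroup G) (hID : I ≤ D)
    (φt : G) (hφt : φt ∈ D) (hφgen : ∀ d ∈ D, ∃ n : ℤ, φt ^ n * d⁻¹ ∈ I) :
    ∃ (f₁ : (↥(kerIdeal I) ⧸
          (Submodule.comap (kerIdeal I).subtype
            (Ideal.span {gtilde I φt} * kerIdeal I : Ideal (MonoidAlgebra ℤ G))))
        →ₗ[MonoidAlgebra ℤ G] (MonoidAlgebra ℤ G ⧸ Ideal.span {gtilde I φt}))
      (f₂ : (MonoidAlgebra ℤ G ⧸ Ideal.span {gtilde I φt}) →+*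
        (MonoidAlgebra ℤ (G ⧸ I) ⧸ Ideal.span {toQuot I (gtilde I φt)})),
      (∀ x : ↥(kerIdeal I),
        f₁ (Submodule.Quotient.mk x) = Ideal.Quotient.mk (Ideal.span {gtilde I φt}) ↑x) ∧
      (∀ x : MonoidAlgebra ℤ G,
        f₂ (Ideal.Quotient.mk (Ideal.span {gtilde I φt}) x)
          = Ideal.Quotient.mk (Ideal.span {toQuot I (gtilde I φt)}) (toQuot I x)) ∧
      Function.Injective f₁ ∧ Function.Exact f₁ f₂ ∧ Function.Surjective f₂ :=
  statement7_general I φt
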